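/- Let Δ' ⊂ ℝ^{n+1} be the bundle polytope over the 1-simplex determined by (H, κ_{N+1}, κ_{N+2}) with fiber a smooth polytope Δ = Δ(κ) ⊂ ℝⁿ, suppose Δ' is combinatorially a product, and suppose H ≠ 0. Call an edge of Δ' vertical if it is parallel to e_{n+1}, and assume the genericity condition: every edge of Δ' whose affine length equals the affine length of some vertical edge is itself vertical. Then Δ' has two vertices v₁, v₂ that are not equivalent: no integral affine transformation φ of ℝ^{n+1} satisfies φ(Δ') = Δ' and φ(v₁) = v₂. -/

import Mathlib

open MeasureTheory Finset
open scoped Pointwise Classical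

noncomputable section

namespace ToricStmt

/-- Euclidean `n`-space. -/
abbrev E (n : ℕ) : Type := EuclideanSpace ℝ (Fin n)

/-- The real vector associated to an integer vector. -/
def iv {n : ℕ} (g : Fin n → ℤ) : E n := WithLp.toLp 2 (fun t => (g t : ℝ))

/-- The standard pairing/dot product. -/
def dot {n : ℕ} (u v : E n) : ℝ := ∑ i, u i * v i

/-- An integer vector is primitive if the gcd of its coordinates is `1`. -/
def IsPrimitive {n : ℕ} (g : Fin n → ℤ) : Prop := Finset.univ.gcd g = 1

/-- The polytope `Δ(κ) = {x : ⟨η i, x⟩ ≤ κ i for all i}`. -/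
def Delta {n N : ℕ} (η : Fin N → Fin n → ℤ) (κ : Fin N → ℝ) : Set (E n) :=
  {x | ∀ i, dot (iv (η i)) x ≤ κ i}

/-- The face `F_I(κ)` of `Δ(κ)`. -/
def Face {n N : ℕ} (η : Fin N → Fin n → ℤ) (κ : Fin N → ℝ) (I : Finset (Fin N)) :
    Set (E n) :=
  {x | x ∈ Delta η κ ∧ ∀ i ∈ I, dot (iv (η i)) x = κ i}

/-- A vertex of `Δ(κ)` is a point which is a face. -/
def IsVertex {n N : ℕ} (η : Fin N → Fin n → ℤ) (κ : Fin N → ℝ) (x : E n) : Prop :=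
  ∃ I : Finset (Fin N), Face η κ I = {x}

/-- The dimension of (the affine hull of) a subset of `E n`. -/
def faceDim {n : ℕ} (F : Set (E n)) : ℕ := Module.finrank ℝ (vectorSpan ℝ F)

/-- The set of constraints active at `x`. -/
def activeIdx {n N : ℕ} (η : Fin N → Fin n → ℤ) (κ : Fin N → ℝ) (x : E n) :
    Finset (Fin N) :=
  Finset.univ.filter fun i => dot (iv (η i)) x = κ i

/-- `Δ(κ)` is a smooth polytope: compact with nonempty interior, all facets of
dimension `n - 1`, and at each vertex exactly `n` facets meet, whose conormals form a
`ℤ`-basis of `ℤⁿ`. -/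
def IsSmoothPolytope {n N : ℕ} (η : Fin N → Fin n → ℤ) (κ : Fin N → ℝ) : Prop :=
  IsCompact (Delta η κ) ∧ (interior (Delta η κ)).Nonempty ∧
  (∀ i, faceDim (Face η κ {i}) = n - 1) ∧
  ∀ x, IsVertex η κ x →
    (activeIdx η κ x).card = n ∧
    Submodule.span ℤ (↑((activeIdx η κ x).image η) : Set (Fin n → ℤ)) = ⊤

/-- A chamber neighbourhood of `κ`: an open connected set of support constants containing
`κ` on which the polytope stays smooth with the same combinatorics. -/
def IsChamberNbhd {n N : ℕ} (η : Fin N → Fin n → ℤ) (κ : Fin N → ℝ)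
    (U : Set (Fin N → ℝ)) : Prop :=
  IsOpen U ∧ IsConnected U ∧ κ ∈ U ∧
  ∀ κ' ∈ U, IsSmoothPolytope η κ' ∧
    ∀ I : Finset (Fin N), ((Face η κ' I).Nonempty ↔ (Face η κ I).Nonempty)

/-- The barycenter of `Δ(κ)` with respect to Lebesgue measure. -/
def bary {n N : ℕ} (η : Fin N → Fin n → ℤ) (κ : Fin N → ℝ) : E n :=
  (volume (Delta η κ)).toReal⁻¹ • ∫ x in Delta η κ, x

/-- `H` is mass linear on `U` with coefficients `γ`. -/
def MassLinearOn {n N : ℕ} (η : Fin N → Fin n → ℤ) (H : E n)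
    (U : Set (Fin N → ℝ)) (γ : Fin N → ℝ) : Prop :=
  ∀ κ' ∈ U, dot H (bary η κ') = ∑ i, γ i * κ' i

/-- `v` and `w` are the two endpoints of an edge (a one-dimensional face) of `Δ(κ)`. -/
def IsEdgeBetween {n N : ℕ} (η : Fin N → Fin n → ℤ) (κ : Fin N → ℝ)
    (v w : E n) : Prop :=
  v ≠ w ∧ IsVertex η κ v ∧ IsVertex η κ w ∧
  ∃ I : Finset (Fin N), Face η κ I = segment ℝ v w

/-- Conormals of the bundle polytope over the `1`-simplex determined by `H`:
the prolonged fiber conormals `(η i, 0)`, then `(0, -1)`, then `(H, 1)`. -/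
def bunEta1 {n N : ℕ} (η : Fin N → Fin n → ℤ) (H : Fin n → ℤ) :
    Fin (N + 2) → Fin (n + 1) → ℤ := fun j t =>
  if hj : (j : ℕ) < N then (if ht : (t : ℕ) < n then η ⟨j, hj⟩ ⟨t, ht⟩ else 0)
  else if (j : ℕ) = N then (if (t : ℕ) = n then -1 else 0)
  else (if ht : (t : ℕ) < n then H ⟨t, ht⟩ else 1)

/-- Support constants of the bundle polytope over the `1`-simplex. -/
def bunKappa1 {N : ℕ} (κ : Fin N → ℝ) (κ1 κ2 : ℝ) : Fin (N + 2) → ℝ := fun j =>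
  if hj : (j : ℕ) < N then κ ⟨j, hj⟩ else if (j : ℕ) = N then κ1 else κ2

/-- The index of the bottom facet `F'_{N+1}`. -/
def idxB {N : ℕ} : Fin (N + 2) := ⟨N, by omega⟩

/-- The index of the top facet `F'_{N+2}`. -/
def idxT {N : ℕ} : Fin (N + 2) := ⟨N + 1, by omega⟩

/-- The bundle polytope over the `1`-simplex is combinatorially a product: it is a
compact smooth polytope, top and bottom facets are disjoint, and for every
`I ⊆ {1,…,N}` the faces `F'_I ∩ F'_{N+1}`, `F_I` and `F'_I ∩ F'_{N+2}` are
simultaneously nonempty or empty. -/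
def CombProd1 {n N : ℕ} (η : Fin N → Fin n → ℤ) (κ : Fin N → ℝ)
    (H : Fin n → ℤ) (κ1 κ2 : ℝ) : Prop :=
  IsSmoothPolytope (bunEta1 η H) (bunKappa1 κ κ1 κ2) ∧
  Face (bunEta1 η H) (bunKappa1 κ κ1 κ2) {idxB, idxT} = ∅ ∧
  ∀ I : Finset (Fin N),
    ((Face (bunEta1 η H) (bunKappa1 κ κ1 κ2)
        (insert idxB (I.image (Fin.castAdd 2)))).Nonempty ↔ (Face η κ I).Nonempty) ∧
    ((Face (bunEta1 η H) (bunKappa1 κ κ1 κ2)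
        (insert idxT (I.image (Fin.castAdd 2)))).Nonempty ↔ (Face η κ I).Nonempty)

/-- The affine length of the segment from `v` to `w`: the positive scalar `c` with
`w - v = c • g` for a primitive integer vector `g` (and `0` if there is none). -/
def affLen {n : ℕ} (v w : E n) : ℝ :=
  if h : ∃ c : ℝ, 0 < c ∧ ∃ g : Fin n → ℤ, IsPrimitive g ∧ w - v = c • iv g
  then h.choose else 0

/-- The last standard basis vector `e_{n+1}` of `ℝ^{n+1}`. -/
def lastBasis (n : ℕ) : E (n + 1) := WithLp.toLp 2 (fun t => if (t : ℕ) = n then 1 else 0)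

/-- The segment from `v` to `w` is vertical, i.e. parallel to `e_{n+1}`. -/
def VerticalSeg {n : ℕ} (v w : E (n + 1)) : Prop := ∃ c : ℝ, w - v = c • lastBasis n

/-- The integral affine self-map `x ↦ A x + c` of `ℝᵐ`. -/
def IntAffMap {m : ℕ} (A : Matrix (Fin m) (Fin m) ℤ) (c : E m) (x : E m) : E m :=
  WithLp.toLp 2 (fun j => (∑ t, (A j t : ℝ) * x t) + c j)

/-! Over every vertex `p` of `Δ` the polytope `Δ'` has the vertical edge from `(p, -κ₁)` to
`(p, κ₂ - ⟨H, p⟩)`, of affine length `κ₁ + κ₂ - ⟨H, p⟩`. As `H ≠ 0` and `Δ` has interior points,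
some vertices `p₁`, `p₂` of `Δ` satisfy `⟨H, p₁⟩ < ⟨H, p₂⟩`. An integral affine symmetry of `Δ'`
taking `(p₁, -κ₁)` to `(p₂, -κ₁)` maps vertices to vertices, edges to edges and preserves affine
length, so it carries the vertical edge over `p₁` to an edge at `(p₂, -κ₁)` of the same affine
length. By genericity that edge is vertical, hence contained in the vertical edge over `p₂`,
which is strictly shorter. -/

open Function Set Filter Topology Matrix

lemma dot_eq_inner {n : ℕ} (u x : E n) : dot u x = inner ℝ u x := by
  simp [dot, PiLp.inner_apply, mul_comm]

lemma dot_add_smul {n : ℕ} (u x y : E n) (a b : ℝ) :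
    dot u (a • x + b • y) = a * dot u x + b * dot u y := by
  simp only [dot_eq_inner, inner_add_right, inner_smul_right]

lemma iv_ne_zero {n : ℕ} {g : Fin n → ℤ} (hg : g ≠ 0) : iv g ≠ 0 := fun h =>
  hg (funext fun t => by simpa [iv] using congrArg (· t) h)

section ExtremePoints

variable {V : Type*} [NormedAddCommGroup V] [NormedSpace ℝ V] {s : Set V}

lemma _root_.IsCompact.exists_mem_extremePoints_forall_le (hs : IsCompact s)
    (hne : s.Nonempty) (l : V →L[ℝ] ℝ) : ∃ x ∈ s.extremePoints ℝ, ∀ y ∈ s, l y ≤ l x := by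
  obtain ⟨x₀, hx₀, hmax⟩ := hs.exists_isMaxOn hne l.continuous.continuousOn
  have hF : IsExposed ℝ s (l.toExposed s) := ContinuousLinearMap.toExposed.isExposed
  obtain ⟨x, hx⟩ := (hF.isCompact hs).extremePoints_nonempty ⟨x₀, hx₀, hmax⟩
  exact ⟨x, hF.isExtreme.extremePoints_subset_extremePoints hx, hx.1.2⟩

lemma _root_.IsCompact.exists_mem_extremePoints_lt (hs : IsCompact s)
    (hint : (interior s).Nonempty) {l : V →L[ℝ] ℝ} (hl : l ≠ 0) :
    ∃ x ∈ s.extremePoints ℝ, ∃ y ∈ s.extremePoints ℝ, l x < l y := by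
  obtain ⟨z, hz⟩ := hint
  obtain ⟨ε, hε, hball⟩ := Metric.isOpen_iff.1 (l.isOpenMap_of_ne_zero hl _ isOpen_interior)
    (l z) ⟨z, hz, rfl⟩
  obtain ⟨b, hb, hbz⟩ := hball (show l z + ε / 2 ∈ Metric.ball (l z) ε by
    rw [Metric.mem_ball, Real.dist_eq, add_sub_cancel_left, abs_of_pos (half_pos hε)]
    exact half_lt_self hε)
  have hne : s.Nonempty := ⟨z, interior_subset hz⟩
  obtain ⟨x, hx, hxmin⟩ := hs.exists_mem_extremePoints_forall_le hne (-l)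
  obtain ⟨y, hy, hymax⟩ := hs.exists_mem_extremePoints_forall_le hne l
  refine ⟨x, hx, y, hy, ?_⟩
  have hxz : l x ≤ l z := by simpa using hxmin z (interior_subset hz)
  linarith [hymax b (interior_subset hb)]

end ExtremePoints

lemma _root_.IsExtreme.image_of_injective {𝕜 V W : Type*} [Ring 𝕜] [PartialOrder 𝕜]
    [IsOrderedRing 𝕜] [AddCommGroup V] [Module 𝕜 V] [AddCommGroup W] [Module 𝕜 W]
    {f : V →ᵃ[𝕜] W} (hf : Injective f) {A B : Set V} (hAB : IsExtreme 𝕜 A B) :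
    IsExtreme 𝕜 (f '' A) (f '' B) := by
  refine ⟨image_mono hAB.subset, ?_⟩
  rintro _ ⟨x, hx, rfl⟩ _ ⟨y, hy, rfl⟩ _ ⟨z, hz, rfl⟩ hzxy
  rw [← image_openSegment, hf.mem_set_image] at hzxy
  exact mem_image_of_mem f (hAB.left_mem_of_mem_openSegment hx hy hz hzxy)

section Polyhedron

variable {m M : ℕ} (η : Fin M → Fin m → ℤ) (κ : Fin M → ℝ)

lemma face_insert (j : Fin M) (I : Finset (Fin M)) :
    Face η κ (insert j I) = Face η κ I ∩ {x | dot (iv (η j)) x = κ j} := by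
  ext x
  simp only [Face, Finset.forall_mem_insert, Set.mem_inter_iff, Set.mem_ofPred_eq]
  tauto

lemma isExtreme_face (I : Finset (Fin M)) : IsExtreme ℝ (Delta η κ) (Face η κ I) := by
  refine ⟨fun x hx => hx.1, fun x hx y hy z hz hzxy => ⟨hx, fun i hi => ?_⟩⟩
  obtain ⟨a, b, ha, hb, hab, rfl⟩ := hzxy
  have hzi := hz.2 i hi
  rw [dot_add_smul] at hzi
  have hsum : a * (κ i - dot (iv (η i)) x) + b * (κ i - dot (iv (η i)) y) = 0 := by
    linear_combination κ i * hab - hzi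
  have hxa : a * (κ i - dot (iv (η i)) x) = 0 := by
    linarith [mul_nonneg ha.le (sub_nonneg.2 (hx i)), mul_nonneg hb.le (sub_nonneg.2 (hy i))]
  linarith [(mul_eq_zero.1 hxa).resolve_left ha.ne']

/-- Only the constraints slack at `x` can fail along the ray from `y` through `x`, and they
stay slack for a short while past `x`. -/
lemma exists_mem_openSegment_of_activeIdx_subset {x y : E m} (hx : x ∈ Delta η κ)
    (hxy : activeIdx η κ x ⊆ activeIdx η κ y) :
    ∃ z ∈ Delta η κ, x ∈ openSegment ℝ y z := by
  have hdot : ∀ i (ε : ℝ), dot (iv (η i)) (x + ε • (x - y)) =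
      dot (iv (η i)) x + ε * (dot (iv (η i)) x - dot (iv (η i)) y) := by
    intro i ε
    have : x + ε • (x - y) = (1 + ε) • x + (-ε) • y := by module
    rw [this, dot_add_smul]; ring
  have hnear : ∀ᶠ ε in 𝓝[>] (0 : ℝ), x + ε • (x - y) ∈ Delta η κ := by
    refine eventually_all.2 fun i => ?_
    by_cases hi : dot (iv (η i)) x = κ i
    · have hyi : dot (iv (η i)) y = κ i :=
        (mem_filter.1 (hxy (mem_filter.2 ⟨mem_univ _, hi⟩))).2
      exact Eventually.of_forall fun ε => by simp [hdot, hi, hyi]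
    · have hcont : Continuous fun ε : ℝ =>
          dot (iv (η i)) x + ε * (dot (iv (η i)) x - dot (iv (η i)) y) := by fun_prop
      have hlim := hcont.tendsto 0
      simp only [zero_mul, add_zero] at hlim
      filter_upwards [nhdsWithin_le_nhds (hlim.eventually (eventually_le_nhds
        (lt_of_le_of_ne (hx i) hi)))] with ε hε
      rw [hdot]; exact hε
  obtain ⟨ε, hεΔ, hε : 0 < ε⟩ := (hnear.and self_mem_nhdsWithin).exists
  refine ⟨x + ε • (x - y), hεΔ, (mem_openSegment_iff_div).2 ⟨ε, 1, hε, one_pos, ?_⟩⟩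
  match_scalars
  · field_simp
    simp
  · field_simp
    ring

lemma face_activeIdx_eq_of_isExtreme {F : Set (E m)} (hF : IsExtreme ℝ (Delta η κ) F)
    {x : E m} (hx : x ∈ F) (hact : ∀ y ∈ F, activeIdx η κ x ⊆ activeIdx η κ y) :
    Face η κ (activeIdx η κ x) = F := by
  refine Subset.antisymm (fun y ⟨hyΔ, hyact⟩ => ?_) fun y hy =>
    ⟨hF.subset hy, fun i hi => (mem_filter.1 (hact y hy hi)).2⟩
  obtain ⟨z, hz, hxyz⟩ := exists_mem_openSegment_of_activeIdx_subset η κ (hF.subset hx)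
    fun i hi => mem_filter.2 ⟨mem_univ _, hyact i hi⟩
  exact hF.left_mem_of_mem_openSegment hyΔ hz hx hxyz

/-- A constraint tight at the midpoint is tight at both endpoints, hence along the segment. -/
lemma exists_face_eq_segment {a b : E m} (h : IsExtreme ℝ (Delta η κ) (segment ℝ a b)) :
    ∃ I, Face η κ I = segment ℝ a b := by
  have hmid : (1 / 2 : ℝ) • a + (1 / 2 : ℝ) • b ∈ segment ℝ a b :=
    ⟨1 / 2, 1 / 2, by norm_num, by norm_num, by norm_num, rfl⟩
  refine ⟨_, face_activeIdx_eq_of_isExtreme η κ h hmid ?_⟩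
  rintro _ ⟨s, t, hs, ht, hst, rfl⟩ i hi
  have hi := (mem_filter.1 hi).2
  have ha := h.subset (left_mem_segment ℝ a b) i
  have hb := h.subset (right_mem_segment ℝ a b) i
  rw [dot_add_smul] at hi
  refine mem_filter.2 ⟨mem_univ _, ?_⟩
  rw [dot_add_smul, show dot (iv (η i)) a = κ i by linarith,
    show dot (iv (η i)) b = κ i by linarith]
  linear_combination κ i * hst

lemma isVertex_iff_mem_extremePoints {x : E m} :
    IsVertex η κ x ↔ x ∈ (Delta η κ).extremePoints ℝ := by
  rw [← isExtreme_singleton]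
  constructor
  · rintro ⟨I, hI⟩
    exact hI ▸ isExtreme_face η κ I
  · intro hx
    rw [← segment_same ℝ x] at hx
    obtain ⟨I, hI⟩ := exists_face_eq_segment η κ hx
    exact ⟨I, hI.trans (segment_same ℝ x)⟩

variable {η κ} {f : E m →ᵃ[ℝ] E m}

lemma IsVertex.image (hf : Injective f) (hΔ : f '' Delta η κ = Delta η κ) {x : E m}
    (hx : IsVertex η κ x) : IsVertex η κ (f x) := by
  rw [isVertex_iff_mem_extremePoints, ← isExtreme_singleton] at hx ⊢
  simpa [hΔ] using hx.image_of_injective hf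

lemma IsEdgeBetween.image (hf : Injective f) (hΔ : f '' Delta η κ = Delta η κ) {v w : E m}
    (hvw : IsEdgeBetween η κ v w) : IsEdgeBetween η κ (f v) (f w) := by
  obtain ⟨hne, hv, hw, I, hI⟩ := hvw
  refine ⟨hf.ne hne, hv.image hf hΔ, hw.image hf hΔ, exists_face_eq_segment η κ ?_⟩
  rw [← image_segment, ← hI, ← hΔ]
  exact (isExtreme_face η κ I).image_of_injective hf

end Polyhedron

section AffineLength

variable {m : ℕ}

lemma isPrimitive_iff {g : Fin m → ℤ} :
    IsPrimitive g ↔ ∀ d : ℤ, (∀ i, d ∣ g i) → IsUnit d := by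
  refine ⟨fun h d hd => isUnit_of_dvd_one (h ▸ Finset.dvd_gcd fun i _ => hd i), fun h => ?_⟩
  rw [IsPrimitive, ← Finset.normalize_gcd, normalize_eq_one]
  exact h _ fun i => Finset.gcd_dvd (mem_univ i)

lemma isPrimitive_single (i : Fin m) : IsPrimitive (Pi.single i 1) :=
  isPrimitive_iff.2 fun d hd => isUnit_of_dvd_one (by simpa using hd i)

lemma IsPrimitive.mulVec {A : Matrix (Fin m) (Fin m) ℤ} (hA : IsUnit A) {g : Fin m → ℤ}
    (hg : IsPrimitive g) : IsPrimitive (A *ᵥ g) := by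
  obtain ⟨u, rfl⟩ := hA
  rw [isPrimitive_iff] at hg ⊢
  intro d hd
  refine hg d fun i => ?_
  rw [← one_mulVec g, ← u.inv_mul, ← mulVec_mulVec]
  unfold Matrix.mulVec dotProduct
  exact Finset.dvd_sum fun j _ => dvd_mul_of_dvd_right (hd j) _

/-- Bézout: writing `1 = ∑ a, g₁ a * u a`, the coefficient is `c₁ = c₂ * ∑ a, g₂ a * u a`. -/
lemma IsPrimitive.exists_int_eq_mul {g₁ g₂ : Fin m → ℤ} (hg₁ : IsPrimitive g₁) {c₁ c₂ : ℝ}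
    (h : c₁ • iv g₁ = c₂ • iv g₂) : ∃ k : ℤ, c₁ = c₂ * k := by
  obtain ⟨u, hu⟩ := Finset.gcd_eq_sum_mul univ g₁
  rw [hg₁] at hu
  have hcoord : ∀ a, c₁ * g₁ a = c₂ * g₂ a := fun a => congrArg (· a) h
  refine ⟨∑ a, g₂ a * u a, ?_⟩
  calc c₁ = c₁ * ((∑ a, g₁ a * u a : ℤ) : ℝ) := by rw [← hu]; simp
    _ = c₂ * ((∑ a, g₂ a * u a : ℤ) : ℝ) := by
      push_cast
      simp only [mul_sum, ← mul_assoc, hcoord]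

lemma IsPrimitive.eq_of_smul_iv_eq {g₁ g₂ : Fin m → ℤ} (hg₁ : IsPrimitive g₁)
    (hg₂ : IsPrimitive g₂) {c₁ c₂ : ℝ} (hc₁ : 0 < c₁) (hc₂ : 0 < c₂)
    (h : c₁ • iv g₁ = c₂ • iv g₂) : c₁ = c₂ := by
  obtain ⟨k₁, hk₁⟩ := hg₁.exists_int_eq_mul h
  obtain ⟨k₂, hk₂⟩ := hg₂.exists_int_eq_mul h.symm
  have hk₁pos : (0 : ℝ) < k₁ := pos_of_mul_pos_right (hk₁ ▸ hc₁) hc₂.le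
  have hk : k₁ * k₂ = 1 := by
    have : c₂ * (k₁ * k₂ : ℝ) = c₂ * 1 := by rw [← mul_assoc, ← hk₁, hk₂, mul_one]
    exact_mod_cast mul_left_cancel₀ hc₂.ne' this
  rw [hk₁, Int.eq_one_of_mul_eq_one_right (by exact_mod_cast hk₁pos.le) hk]
  simp

lemma affLen_eq_of_sub_eq_smul {v w : E m} {a : ℝ} {g : Fin m → ℤ} (ha : 0 < a)
    (hg : IsPrimitive g) (h : w - v = a • iv g) : affLen v w = a := by
  have hex : ∃ c : ℝ, 0 < c ∧ ∃ g : Fin m → ℤ, IsPrimitive g ∧ w - v = c • iv g :=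
    ⟨a, ha, g, hg, h⟩
  rw [affLen, dif_pos hex]
  obtain ⟨hc, g', hg', h'⟩ := hex.choose_spec
  exact hg'.eq_of_smul_iv_eq hg hc ha (h'.symm.trans h)

def intAffMap (A : Matrix (Fin m) (Fin m) ℤ) (c : E m) : E m →ᵃ[ℝ] E m where
  toFun := IntAffMap A c
  linear := Matrix.toEuclideanLin (A.map (↑))
  map_vadd' x v := by
    ext j
    simp only [IntAffMap, vadd_eq_add, PiLp.add_apply, mul_add, sum_add_distrib, toEuclideanLin,
      ofLp_toLpLin, toLin'_apply, mulVec, dotProduct, map_apply]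
    ring

lemma intAffMap_apply (A : Matrix (Fin m) (Fin m) ℤ) (c x : E m) :
    intAffMap A c x = IntAffMap A c x := rfl

lemma injective_intAffMap {A : Matrix (Fin m) (Fin m) ℤ} (hA : IsUnit A) (c : E m) :
    Injective (intAffMap A c) := by
  rw [← AffineMap.linear_injective_iff]
  intro x y h
  have hM : IsUnit (A.map ((↑) : ℤ → ℝ)) := hA.map (Int.castRingHom ℝ).mapMatrix
  exact WithLp.ofLp_injective 2 (mulVec_injective_iff_isUnit.2 hM (congrArg WithLp.ofLp h))

lemma affLen_intAffMap {A : Matrix (Fin m) (Fin m) ℤ} (hA : IsUnit A) (c : E m) {v w : E m}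
    {a : ℝ} {g : Fin m → ℤ} (ha : 0 < a) (hg : IsPrimitive g) (h : w - v = a • iv g) :
    affLen (intAffMap A c v) (intAffMap A c w) = a := by
  refine affLen_eq_of_sub_eq_smul ha (hg.mulVec hA) ?_
  rw [← vsub_eq_sub, ← AffineMap.linearMap_vsub, vsub_eq_sub, h, map_smul]
  congr 1
  ext j
  exact (RingHom.map_mulVec (Int.castRingHom ℝ) A g j).symm

end AffineLength

section Bundle

variable {n N : ℕ}

def proj (y : E (n + 1)) : E n := WithLp.toLp 2 fun i => y i.castSucc

def lift (p : E n) (t : ℝ) : E (n + 1) := WithLp.toLp 2 (Fin.snoc (α := fun _ => ℝ) p t)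

@[simp] lemma proj_lift (p : E n) (t : ℝ) : proj (lift p t) = p := by
  ext i; simp [proj, lift]

@[simp] lemma lift_last (p : E n) (t : ℝ) : lift p t (Fin.last n) = t := by
  simp [lift]

lemma eq_lift_iff {y : E (n + 1)} {p : E n} {t : ℝ} :
    y = lift p t ↔ proj y = p ∧ y (Fin.last n) = t := by
  refine ⟨by rintro rfl; simp, fun ⟨hp, ht⟩ => ?_⟩
  ext j
  induction j using Fin.lastCases <;> simp [lift, ← hp, ← ht, proj]

lemma lastBasis_eq_iv : lastBasis n = iv (Pi.single (Fin.last n) 1) := by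
  ext j
  simp [lastBasis, iv, Pi.single_apply, Fin.ext_iff]

lemma lift_sub_lift (p : E n) (s t : ℝ) : lift p t - lift p s = (t - s) • lastBasis n := by
  ext j
  induction j using Fin.lastCases with
  | last => simp [lift, lastBasis]
  | cast i => simp [lift, lastBasis, i.isLt.ne]

lemma lineMap_lift (p : E n) (t : ℝ) :
    AffineMap.lineMap (lift p 0) (lift p 1) t = lift p t := by
  rw [AffineMap.lineMap_apply_module', lift_sub_lift, ← eq_sub_iff_add_eq, lift_sub_lift]
  simp

lemma segment_lift (p : E n) {s t : ℝ} (hst : s ≤ t) :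
    segment ℝ (lift p s) (lift p t) =
      {y | proj y = p ∧ s ≤ y (Fin.last n) ∧ y (Fin.last n) ≤ t} := by
  rw [← lineMap_lift p s, ← lineMap_lift p t, ← image_segment, segment_eq_Icc hst]
  ext y
  simp only [mem_image, Set.mem_Icc, lineMap_lift, Set.mem_ofPred_eq, eq_comm (b := y),
    eq_lift_iff]
  constructor
  · rintro ⟨r, ⟨hsr, hrt⟩, hp, rfl⟩
    exact ⟨hp, hsr, hrt⟩
  · rintro ⟨hp, hs, ht⟩
    exact ⟨_, ⟨hs, ht⟩, hp, rfl⟩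

variable (η : Fin N → Fin n → ℤ) (H : Fin n → ℤ) (κ : Fin N → ℝ) (κ1 κ2 : ℝ)

lemma dot_bunEta1_castAdd (i : Fin N) (y : E (n + 1)) :
    dot (iv (bunEta1 η H (Fin.castAdd 2 i))) y = dot (iv (η i)) (proj y) := by
  simp [dot, Fin.sum_univ_castSucc, iv, bunEta1, proj]

lemma dot_bunEta1_idxB (y : E (n + 1)) :
    dot (iv (bunEta1 η H idxB)) y = -y (Fin.last n) := by
  simp [dot, Fin.sum_univ_castSucc, iv, bunEta1, idxB, fun i : Fin n => i.isLt.ne]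

lemma dot_bunEta1_idxT (y : E (n + 1)) :
    dot (iv (bunEta1 η H idxT)) y = dot (iv H) (proj y) + y (Fin.last n) := by
  simp [dot, Fin.sum_univ_castSucc, iv, bunEta1, idxT, proj]

@[simp] lemma bunKappa1_castAdd (i : Fin N) : bunKappa1 κ κ1 κ2 (Fin.castAdd 2 i) = κ i := by
  simp [bunKappa1]

@[simp] lemma bunKappa1_idxB : bunKappa1 κ κ1 κ2 idxB = κ1 := by
  simp [bunKappa1, idxB]

@[simp] lemma bunKappa1_idxT : bunKappa1 κ κ1 κ2 idxT = κ2 := by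
  simp [bunKappa1, idxT]

lemma exists_castAdd_or_eq_idxB_or_eq_idxT (j : Fin (N + 2)) :
    (∃ i, j = Fin.castAdd 2 i) ∨ j = idxB ∨ j = idxT := by
  obtain ⟨j, hj⟩ := j
  rcases lt_or_ge j N with h | h
  · exact Or.inl ⟨⟨j, h⟩, rfl⟩
  · right
    simp only [idxB, idxT, Fin.ext_iff]
    omega

lemma mem_delta_bunEta1 {y : E (n + 1)} :
    y ∈ Delta (bunEta1 η H) (bunKappa1 κ κ1 κ2) ↔
      proj y ∈ Delta η κ ∧ -y (Fin.last n) ≤ κ1 ∧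
        dot (iv H) (proj y) + y (Fin.last n) ≤ κ2 := by
  refine ⟨fun hy => ⟨fun i => ?_, ?_, ?_⟩, fun ⟨hΔ, hB, hT⟩ j => ?_⟩
  · simpa [dot_bunEta1_castAdd] using hy (Fin.castAdd 2 i)
  · simpa [dot_bunEta1_idxB] using hy idxB
  · simpa [dot_bunEta1_idxT] using hy idxT
  · rcases exists_castAdd_or_eq_idxB_or_eq_idxT j with ⟨i, rfl⟩ | rfl | rfl
    · simpa [dot_bunEta1_castAdd] using hΔ i
    · simpa [dot_bunEta1_idxB] using hB
    · simpa [dot_bunEta1_idxT] using hT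

lemma mem_face_bunEta1_image_castAdd {I : Finset (Fin N)} {y : E (n + 1)} :
    y ∈ Face (bunEta1 η H) (bunKappa1 κ κ1 κ2) (I.image (Fin.castAdd 2)) ↔
      y ∈ Delta (bunEta1 η H) (bunKappa1 κ κ1 κ2) ∧ proj y ∈ Face η κ I := by
  simp only [Face, Finset.forall_mem_image, dot_bunEta1_castAdd, bunKappa1_castAdd,
    Set.mem_ofPred_eq, mem_delta_bunEta1]
  tauto

variable {η H κ κ1 κ2}

lemma mem_face_bunEta1_of_face_eq_singleton {I : Finset (Fin N)} {p : E n}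
    (hI : Face η κ I = {p}) {y : E (n + 1)} :
    y ∈ Face (bunEta1 η H) (bunKappa1 κ κ1 κ2) (I.image (Fin.castAdd 2)) ↔
      proj y = p ∧ -κ1 ≤ y (Fin.last n) ∧ y (Fin.last n) ≤ κ2 - dot (iv H) p := by
  have hpΔ : p ∈ Delta η κ := (hI.symm ▸ Set.mem_singleton p : p ∈ Face η κ I).1
  rw [mem_face_bunEta1_image_castAdd, hI, mem_delta_bunEta1, Set.mem_singleton_iff]
  constructor
  · rintro ⟨⟨-, hB, hT⟩, rfl⟩
    exact ⟨rfl, by linarith, by linarith⟩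
  · rintro ⟨rfl, hB, hT⟩
    exact ⟨⟨hpΔ, by linarith, by linarith⟩, rfl⟩

lemma CombProd1.neg_lt_sub_dot_of_face_eq_singleton (hcomb : CombProd1 η κ H κ1 κ2)
    {I : Finset (Fin N)} {p : E n} (hI : Face η κ I = {p}) : -κ1 < κ2 - dot (iv H) p := by
  have hle : -κ1 ≤ κ2 - dot (iv H) p := by
    obtain ⟨y, hy⟩ := ((hcomb.2.2 I).1).2 ⟨p, hI ▸ Set.mem_singleton p⟩
    rw [face_insert, Set.mem_inter_iff, mem_face_bunEta1_of_face_eq_singleton hI] at hy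
    linarith [hy.1.2.1, hy.1.2.2]
  refine hle.lt_of_ne fun heq => ?_
  have hcol : lift p (-κ1) ∈ Face (bunEta1 η H) (bunKappa1 κ κ1 κ2) (I.image (Fin.castAdd 2)) :=
    (mem_face_bunEta1_of_face_eq_singleton hI).2 ⟨by simp, by simp, by rw [lift_last]; linarith⟩
  have hmem : lift p (-κ1) ∈ Face (bunEta1 η H) (bunKappa1 κ κ1 κ2) {idxB, idxT} := by
    refine ⟨hcol.1, ?_⟩
    simp only [Finset.mem_insert, Finset.mem_singleton]
    rintro i (rfl | rfl)
    · simp [dot_bunEta1_idxB]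
    · simp only [dot_bunEta1_idxT, proj_lift, lift_last, bunKappa1_idxT]
      linarith
  rw [hcomb.2.1] at hmem
  exact hmem

lemma isEdgeBetween_lift_of_face_eq_singleton {I : Finset (Fin N)} {p : E n}
    (hI : Face η κ I = {p}) (hlt : -κ1 < κ2 - dot (iv H) p) :
    IsEdgeBetween (bunEta1 η H) (bunKappa1 κ κ1 κ2)
      (lift p (-κ1)) (lift p (κ2 - dot (iv H) p)) := by
  set J := I.image (Fin.castAdd 2)
  have hbot : Face (bunEta1 η H) (bunKappa1 κ κ1 κ2) (insert idxB J) = {lift p (-κ1)} := by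
    ext y
    rw [face_insert, Set.mem_inter_iff, mem_face_bunEta1_of_face_eq_singleton hI,
      Set.mem_singleton_iff, eq_lift_iff, Set.mem_ofPred_eq, dot_bunEta1_idxB, bunKappa1_idxB]
    constructor
    · rintro ⟨⟨hp, -, -⟩, h⟩
      exact ⟨hp, by linarith⟩
    · rintro ⟨hp, h⟩
      exact ⟨⟨hp, h.ge, h ▸ hlt.le⟩, by linarith⟩
  have htop : Face (bunEta1 η H) (bunKappa1 κ κ1 κ2) (insert idxT J) =
      {lift p (κ2 - dot (iv H) p)} := by
    ext y
    rw [face_insert, Set.mem_inter_iff, mem_face_bunEta1_of_face_eq_singleton hI,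
      Set.mem_singleton_iff, eq_lift_iff, Set.mem_ofPred_eq, dot_bunEta1_idxT, bunKappa1_idxT]
    constructor
    · rintro ⟨⟨rfl, -, -⟩, h⟩
      exact ⟨rfl, by linarith⟩
    · rintro ⟨rfl, h⟩
      exact ⟨⟨rfl, h ▸ hlt.le, h.le⟩, by linarith⟩
  refine ⟨fun h => ?_, ⟨_, hbot⟩, ⟨_, htop⟩, J, ?_⟩
  · have := congrArg (· (Fin.last n)) h
    simp only [lift_last] at this
    linarith
  · ext y
    rw [mem_face_bunEta1_of_face_eq_singleton hI, segment_lift p hlt.le]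
    rfl

lemma affLen_lift_le_of_verticalSeg {p : E n} {w : E (n + 1)}
    (hw : w ∈ Delta (bunEta1 η H) (bunKappa1 κ κ1 κ2)) (hne : lift p (-κ1) ≠ w)
    (hvert : VerticalSeg (lift p (-κ1)) w) :
    affLen (lift p (-κ1)) w ≤ κ2 - dot (iv H) p - -κ1 := by
  obtain ⟨c, hc⟩ := hvert
  obtain rfl : w = lift p (-κ1 + c) :=
    sub_left_inj.1 (by rw [hc, lift_sub_lift, add_sub_cancel_left])
  rw [mem_delta_bunEta1, proj_lift, lift_last] at hw
  have hc0 : c ≠ 0 := by rintro rfl; simp at hne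
  have hcpos : 0 < c := lt_of_le_of_ne (by linarith [hw.2.1]) hc0.symm
  rw [lastBasis_eq_iv] at hc
  rw [affLen_eq_of_sub_eq_smul hcpos (isPrimitive_single _) hc]
  linarith [hw.2.2]

end Bundle

theorem stmt12_general {n N : ℕ}
    (η : Fin N → Fin n → ℤ)
    (κ : Fin N → ℝ) (hsm : IsSmoothPolytope η κ)
    (H : Fin n → ℤ) (hH : H ≠ 0) (κ1 κ2 : ℝ)
    (hcomb : CombProd1 η κ H κ1 κ2)
    (hgen : ∀ v w v' w' : E (n + 1),
      IsEdgeBetween (bunEta1 η H) (bunKappa1 κ κ1 κ2) v w →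
      IsEdgeBetween (bunEta1 η H) (bunKappa1 κ κ1 κ2) v' w' →
      VerticalSeg v' w' → affLen v w = affLen v' w' → VerticalSeg v w) :
    ∃ v₁ v₂ : E (n + 1),
      IsVertex (bunEta1 η H) (bunKappa1 κ κ1 κ2) v₁ ∧
      IsVertex (bunEta1 η H) (bunKappa1 κ κ1 κ2) v₂ ∧
      ¬ ∃ (A : Matrix (Fin (n + 1)) (Fin (n + 1)) ℤ) (c : E (n + 1)),
          IsUnit A ∧
          IntAffMap A c '' Delta (bunEta1 η H) (bunKappa1 κ κ1 κ2) =
            Delta (bunEta1 η H) (bunKappa1 κ κ1 κ2) ∧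
          IntAffMap A c v₁ = v₂ := by
  obtain ⟨hcpt, hint, -, -⟩ := hsm
  have hl : innerSL ℝ (iv H) ≠ 0 := by
    rw [← norm_ne_zero_iff, innerSL_apply_norm, norm_ne_zero_iff]
    exact iv_ne_zero hH
  obtain ⟨p₁, hp₁, p₂, hp₂, hlt⟩ := hcpt.exists_mem_extremePoints_lt hint hl
  simp only [innerSL_apply_apply, ← dot_eq_inner] at hlt
  obtain ⟨I₁, hI₁⟩ := (isVertex_iff_mem_extremePoints η κ).2 hp₁
  obtain ⟨I₂, hI₂⟩ := (isVertex_iff_mem_extremePoints η κ).2 hp₂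
  have hpos := hcomb.neg_lt_sub_dot_of_face_eq_singleton hI₁
  have hedge₁ := isEdgeBetween_lift_of_face_eq_singleton hI₁ hpos
  have hedge₂ := isEdgeBetween_lift_of_face_eq_singleton hI₂
    (hcomb.neg_lt_sub_dot_of_face_eq_singleton hI₂)
  refine ⟨_, _, hedge₁.2.1, hedge₂.2.1, fun ⟨A, c, hA, hΔ, hmap⟩ => ?_⟩
  have hsub := lift_sub_lift p₁ (-κ1) (κ2 - dot (iv H) p₁)
  rw [lastBasis_eq_iv] at hsub
  have himage := hedge₁.image (injective_intAffMap hA c) hΔ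
  have hlen := affLen_intAffMap hA c (sub_pos.2 hpos) (isPrimitive_single _) hsub
  rw [intAffMap_apply, intAffMap_apply, hmap] at himage hlen
  have hvert := hgen _ _ _ _ himage hedge₁ ⟨_, lift_sub_lift _ _ _⟩
    (hlen.trans (affLen_eq_of_sub_eq_smul (sub_pos.2 hpos) (isPrimitive_single _) hsub).symm)
  have hshort := affLen_lift_le_of_verticalSeg
    ((isVertex_iff_mem_extremePoints _ _).1 himage.2.2.1).1 himage.1 hvert
  linarith

/-- A nontrivial (`H ≠ 0`) bundle polytope over the `1`-simplex which
is combinatorially a product and generic (every edge whose affine length equals that of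
some vertical edge is itself vertical) has two vertices not related by any integral
affine symmetry of the polytope. -/
theorem stmt12 {n N : ℕ} (hn : 1 ≤ n) (hN : n + 1 ≤ N)
    (η : Fin N → Fin n → ℤ) (hprim : ∀ i, IsPrimitive (η i))
    (κ : Fin N → ℝ) (hsm : IsSmoothPolytope η κ)
    (H : Fin n → ℤ) (hH : H ≠ 0) (κ1 κ2 : ℝ)
    (hcomb : CombProd1 η κ H κ1 κ2)
    (hgen : ∀ v w v' w' : E (n + 1),
      IsEdgeBetween (bunEta1 η H) (bunKappa1 κ κ1 κ2) v w →
      IsEdgeBetween (bunEta1 η H) (bunKappa1 κ κ1 κ2) v' w' →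
      VerticalSeg v' w' → affLen v w = affLen v' w' → VerticalSeg v w) :
    ∃ v₁ v₂ : E (n + 1),
      IsVertex (bunEta1 η H) (bunKappa1 κ κ1 κ2) v₁ ∧
      IsVertex (bunEta1 η H) (bunKappa1 κ κ1 κ2) v₂ ∧
      ¬ ∃ (A : Matrix (Fin (n + 1)) (Fin (n + 1)) ℤ) (c : E (n + 1)),
          IsUnit A ∧
          IntAffMap A c '' Delta (bunEta1 η H) (bunKappa1 κ κ1 κ2) =
            Delta (bunEta1 η H) (bunKappa1 κ κ1 κ2) ∧
          IntAffMap A c v₁ = v₂ :=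
  stmt12_general η κ hsm H hH κ1 κ2 hcomb hgen

end ToricStmt
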